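/- Fix an integer s ≥ 2 and p ∈ (0,1). Let X_1, X_2, … be an i.i.d. sequence of random variables with the Log-Logistic(α;0,1) distribution, α > 0, and for each i ∈ ℕ let Q_{i,s}^{LL*} = (1/2)·log(X_{(is, i(s+1)−1)}/X_{(i, i(s+1)−1)})/log(s) be computed from the first n = i(s+1)−1 observations, and set (F̂_{i,s,LL}^←)^*(p) = (p/(1−p))^{Q_{i,s}^{LL*}}. Then (F̂_{i,s,LL}^←)^*(p) converges almost surely, as i → ∞, to the theoretical quantile F_X^←(p) = (p/(1−p))^{1/α}. -/

import Mathlib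

/-!
The strong law of large numbers, applied to the indicators `1{X_j ≤ y}`, makes the empirical
distribution function converge almost surely to `F = logLogisticCDF α` at every rational `y`.
Since `X_(k,n) ≤ y` exactly when at least `k` sample points are `≤ y`, and `F` crosses the level
`c ∈ (0,1)` only at its quantile `(c/(1-c))^(1/α)`, this forces `X_(k,n)` to converge to that
quantile whenever `k/n → c`. For `k/n → s/(s+1)` and `k/n → 1/(s+1)` the two quantiles are
`s^(1/α)` and `s^(-1/α)`, so `Q_{i,s} → 1/α`, and `t ↦ (p/(1-p))^t` is continuous.
-/

open MeasureTheory ProbabilityTheory Real Filter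

/-- The `k`-th order statistic (1-based indexing) of the sample `x : Fin n → ℝ`. -/
noncomputable def orderStat (n : ℕ) (x : Fin n → ℝ) (k : ℕ) : ℝ :=
  (Multiset.sort ((List.ofFn x : List ℝ) : Multiset ℝ) (· ≤ ·)).getD (k - 1) 0

noncomputable def logLogisticCDF (α : ℝ) (x : ℝ) : ℝ :=
  if 0 < x then 1 / (1 + x ^ (-α)) else 0

open Finset Topology

theorem List.Pairwise.getElem_le_iff_lt_countP {α : Type*} [LinearOrder α] {l : List α}
    (hl : l.Pairwise (· ≤ ·)) {k : ℕ} (hk : k < l.length) (y : α) :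
    l[k] ≤ y ↔ k < l.countP (· ≤ y) := by
  have hsplit : l = l.take k ++ l[k] :: l.drop (k + 1) := by
    rw [← List.drop_eq_getElem_cons, List.take_append_drop]
  have hlen : (l.take k).length = k := List.length_take_of_le hk.le
  rw [hsplit] at hl
  obtain ⟨-, hmid, hleft⟩ := List.pairwise_append.1 hl
  have hright := (List.pairwise_cons.1 hmid).1
  rw [congrArg (List.countP (· ≤ y)) hsplit, List.countP_append, List.countP_cons]
  constructor
  · intro hky
    have hprefix : (l.take k).countP (· ≤ y) = k := by
      rw [List.countP_eq_length.2, hlen]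
      exact fun a ha => decide_eq_true ((hleft a ha _ List.mem_cons_self).trans hky)
    simp [hprefix, hky]
  · intro hcount
    by_contra! hyk
    have hsuffix : (l.drop (k + 1)).countP (· ≤ y) = 0 :=
      List.countP_eq_zero.2 fun b hb => by simpa using hyk.trans_le (hright b hb)
    have hprefix := (l.take k).countP_le_length (p := (· ≤ y))
    simp only [hsuffix, hyk.not_ge, decide_false, Bool.false_eq_true, ↓reduceIte,
      add_zero] at hcount
    omega

theorem orderStat_le_iff {n : ℕ} (x : Fin n → ℝ) {k : ℕ} (hk1 : 1 ≤ k) (hkn : k ≤ n) (y : ℝ) :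
    orderStat n x k ≤ y ↔ k ≤ #{j | x j ≤ y} := by
  set l := Multiset.sort ((List.ofFn x : List ℝ) : Multiset ℝ) (· ≤ ·)
  have hcount : l.countP (· ≤ y) = #{j | x j ≤ y} := by
    rw [← Multiset.coe_countP, Multiset.sort_eq, ← Fin.univ_val_map, Multiset.countP_map]
    rfl
  have hlen : l.length = n := by simp [l]
  rw [orderStat, List.getD_eq_getElem _ _ (by rw [hlen]; omega),
    (Multiset.pairwise_sort _ _).getElem_le_iff_lt_countP, hcount]
  omega

section LogLogistic

variable {α : ℝ}

theorem logLogisticCDF_nonneg (y : ℝ) : 0 ≤ logLogisticCDF α y := by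
  unfold logLogisticCDF
  split_ifs <;> positivity

theorem logLogisticCDF_lt_logLogisticCDF (hα : 0 < α) {a b : ℝ} (ha : 0 < a) (hab : a < b) :
    logLogisticCDF α a < logLogisticCDF α b := by
  have hb : 0 < b := ha.trans hab
  rw [logLogisticCDF, logLogisticCDF, if_pos ha, if_pos hb]
  have := Real.rpow_lt_rpow_of_neg ha hab (neg_neg_of_pos hα)
  gcongr

theorem logLogisticCDF_quantile (hα : 0 < α) {q : ℝ} (hq : q ∈ Set.Ioo (0 : ℝ) 1) :
    logLogisticCDF α ((q / (1 - q)) ^ (1 / α)) = q := by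
  obtain ⟨hq0, hq1⟩ := hq
  have hodds : 0 < q / (1 - q) := div_pos hq0 (sub_pos.2 hq1)
  rw [logLogisticCDF, if_pos (by positivity), ← Real.rpow_mul hodds.le,
    show 1 / α * -α = -1 by field_simp, Real.rpow_neg_one, inv_div]
  field_simp
  ring

theorem logLogisticCDF_lt_of_lt_quantile (hα : 0 < α) {q y : ℝ} (hq : q ∈ Set.Ioo (0 : ℝ) 1)
    (hy : y < (q / (1 - q)) ^ (1 / α)) : logLogisticCDF α y < q := by
  rcases le_or_gt y 0 with hy0 | hy0
  · rw [logLogisticCDF, if_neg hy0.not_gt]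
    exact hq.1
  · simpa only [logLogisticCDF_quantile hα hq] using logLogisticCDF_lt_logLogisticCDF hα hy0 hy

theorem lt_logLogisticCDF_of_quantile_lt (hα : 0 < α) {q y : ℝ} (hq : q ∈ Set.Ioo (0 : ℝ) 1)
    (hy : (q / (1 - q)) ^ (1 / α) < y) : q < logLogisticCDF α y := by
  have hξ : 0 < (q / (1 - q)) ^ (1 / α) := Real.rpow_pos_of_pos (div_pos hq.1 (sub_pos.2 hq.2)) _
  simpa only [logLogisticCDF_quantile hα hq] using logLogisticCDF_lt_logLogisticCDF hα hξ hy

end LogLogistic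

theorem identDistrib_of_forall_measure_le_eq {Ω : Type*} [MeasurableSpace Ω] {μ : Measure Ω}
    [IsFiniteMeasure μ] {X Y : Ω → ℝ} (hX : Measurable X) (hY : Measurable Y)
    (h : ∀ x, μ {ω | X ω ≤ x} = μ {ω | Y ω ≤ x}) : IdentDistrib X Y μ μ where
  aemeasurable_fst := hX.aemeasurable
  aemeasurable_snd := hY.aemeasurable
  map_eq := Measure.ext_of_Iic _ _ fun x => by
    rw [Measure.map_apply hX measurableSet_Iic, Measure.map_apply hY measurableSet_Iic]
    exact h x

noncomputable def empiricalCDF (x : ℕ → ℝ) (n : ℕ) (y : ℝ) : ℝ :=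
  (#{j : Fin n | x j ≤ y} : ℝ) / n

open Function in
theorem ae_tendsto_empiricalCDF {Ω : Type*} [MeasurableSpace Ω] {μ : Measure Ω}
    [IsFiniteMeasure μ] {X : ℕ → Ω → ℝ} (hmeas : Measurable (X 0))
    (hindep : Pairwise ((IndepFun · · μ) on X)) (hident : ∀ k, IdentDistrib (X k) (X 0) μ μ)
    (y : ℝ) :
    ∀ᵐ ω ∂μ, Tendsto (fun n => empiricalCDF (X · ω) n y) atTop (𝓝 (μ.real {ω | X 0 ω ≤ y})) := by
  set g : ℝ → ℝ := (Set.Iic y).indicator 1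
  have hg : Measurable g := measurable_one.indicator measurableSet_Iic
  have hind : g ∘ X 0 = (X 0 ⁻¹' Set.Iic y).indicator 1 := by
    ext ω
    exact (Set.indicator_comp_right (g := 1) (x := ω) (X 0)).symm
  have hint : Integrable (g ∘ X 0) μ :=
    hind ▸ (integrable_const 1).indicator (hmeas measurableSet_Iic)
  have hmean : ∫ ω, g (X 0 ω) ∂μ = μ.real {ω | X 0 ω ≤ y} := by
    change ∫ ω, (g ∘ X 0) ω ∂μ = _
    rw [hind, integral_indicator_one (hmeas measurableSet_Iic)]
    rfl
  have hsum : ∀ ω n, ∑ j ∈ range n, g (X j ω) = #{j : Fin n | X j ω ≤ y} := by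
    intro ω n
    rw [card_filter, ← Fin.sum_univ_eq_sum_range]
    push_cast
    simp [g, Set.indicator_apply]
  have hslln := strong_law_ae_real (fun k => g ∘ X k) hint
    (fun i j hij => (hindep hij).comp hg hg) (fun k => (hident k).comp hg)
  filter_upwards [hslln] with ω hω
  simpa only [empiricalCDF, Function.comp_apply, hsum, hmean] using hω

section OrderStatistics

variable {ι : Type*} {l : Filter ι} {n k : ι → ℕ}

theorem eventually_pos_and_lt_of_tendsto_div {c : ℝ} (hc : c ∈ Set.Ioo (0 : ℝ) 1)
    (hk : Tendsto (fun i => (k i : ℝ) / n i) l (𝓝 c)) : ∀ᶠ i in l, 0 < k i ∧ k i < n i := by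
  filter_upwards [hk.eventually (Ioo_mem_nhds hc.1 hc.2)] with i ⟨hpos, hlt1⟩
  have hn : (0 : ℝ) < n i := by
    rcases div_pos_iff.1 hpos with h | h
    · exact h.2
    · exact absurd h.1 (Nat.cast_nonneg _).not_gt
  rw [div_lt_one hn] at hlt1
  exact ⟨by exact_mod_cast (div_pos_iff_of_pos_right hn).1 hpos, by exact_mod_cast hlt1⟩

theorem tendsto_orderStat_of_tendsto_empiricalCDF {x : ℕ → ℝ} {F : ℝ → ℝ} {c ξ : ℝ}
    (hemp : ∀ y : ℚ, Tendsto (fun m => empiricalCDF x m y) atTop (𝓝 (F y)))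
    (hn : Tendsto n l atTop) (hc : c ∈ Set.Ioo (0 : ℝ) 1)
    (hk : Tendsto (fun i => (k i : ℝ) / n i) l (𝓝 c))
    (hlt : ∀ y < ξ, F y < c) (hgt : ∀ y, ξ < y → c < F y) :
    Tendsto (fun i => orderStat (n i) (fun j => x j) (k i)) l (𝓝 ξ) := by
  have hrank := eventually_pos_and_lt_of_tendsto_div hc hk
  refine tendsto_order.2 ⟨fun a ha => ?_, fun a ha => ?_⟩
  · obtain ⟨y, hay, hyξ⟩ := exists_rat_btwn ha
    filter_upwards [((hemp y).comp hn).eventually_lt hk (hlt y hyξ), hrank]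
      with i hcount ⟨hk0, hkn⟩
    rw [Function.comp_apply, empiricalCDF,
      div_lt_div_iff_of_pos_right (by exact_mod_cast hk0.trans hkn), Nat.cast_lt] at hcount
    by_contra! hle
    exact hcount.not_ge ((orderStat_le_iff _ hk0 hkn.le y).1 (hle.trans hay.le))
  · obtain ⟨y, hξy, hya⟩ := exists_rat_btwn ha
    filter_upwards [hk.eventually_lt ((hemp y).comp hn) (hgt y hξy), hrank]
      with i hcount ⟨hk0, hkn⟩
    rw [Function.comp_apply, empiricalCDF,
      div_lt_div_iff_of_pos_right (by exact_mod_cast hk0.trans hkn), Nat.cast_lt] at hcount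
    exact ((orderStat_le_iff _ hk0 hkn.le y).2 hcount.le).trans_lt hya

end OrderStatistics

theorem tendsto_mul_sub_one_atTop {m : ℕ} (hm : 0 < m) :
    Tendsto (fun i : ℕ => i * m - 1) atTop atTop :=
  (tendsto_sub_atTop_nat 1).comp
    (tendsto_atTop_mono (fun i => Nat.le_mul_of_pos_right i hm) tendsto_id)

theorem tendsto_natCast_mul_div_mul_sub_one (c : ℕ) {m : ℕ} (hm : 0 < m) :
    Tendsto (fun i : ℕ => ((i * c : ℕ) : ℝ) / (i * m - 1 : ℕ)) atTop (𝓝 (c / m)) := by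
  have hlim : Tendsto (fun i : ℕ => (c : ℝ) / (m - 1 / i)) atTop (𝓝 (c / (m - 0))) :=
    tendsto_const_nhds.div (tendsto_const_nhds.sub tendsto_one_div_atTop_nhds_zero_nat)
      (by simpa using hm.ne')
  rw [sub_zero] at hlim
  refine hlim.congr' ?_
  filter_upwards [eventually_ge_atTop 2] with i hi
  have hi' : (2 : ℝ) ≤ i := by exact_mod_cast hi
  have hm' : (1 : ℝ) ≤ m := by exact_mod_cast hm
  rw [Nat.cast_sub (by nlinarith), Nat.cast_mul, Nat.cast_mul, Nat.cast_one]
  have : (0 : ℝ) < i * m - 1 := by nlinarith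
  field_simp

theorem tendsto_orderStat_mul_sub_one_logLogistic {α : ℝ} (hα : 0 < α) {x : ℕ → ℝ}
    (hemp : ∀ y : ℚ, Tendsto (fun n => empiricalCDF x n y) atTop (𝓝 (logLogisticCDF α y)))
    {c m : ℕ} (hc : 0 < c) (hcm : c < m) :
    Tendsto (fun i : ℕ => orderStat (i * m - 1) (fun j => x j) (i * c)) atTop
      (𝓝 (((c : ℝ) / (m - c)) ^ (1 / α))) := by
  have hm : 0 < m := hc.trans hcm
  have hcm' : (c : ℝ) < m := by exact_mod_cast hcm
  have hq : (c : ℝ) / m ∈ Set.Ioo (0 : ℝ) 1 :=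
    ⟨by positivity, (div_lt_one (by positivity)).2 hcm'⟩
  have hodds : (c : ℝ) / m / (1 - c / m) = c / (m - c) := by field_simp
  rw [← hodds]
  exact tendsto_orderStat_of_tendsto_empiricalCDF hemp (tendsto_mul_sub_one_atTop hm) hq
    (tendsto_natCast_mul_div_mul_sub_one c hm) (fun _ => logLogisticCDF_lt_of_lt_quantile hα hq)
    (fun _ => lt_logLogisticCDF_of_quantile_lt hα hq)

theorem tendsto_half_log_div_div_log {ι : Type*} {l : Filter ι} {a b : ι → ℝ} {s β : ℝ}
    (hs : 1 < s) (ha : Tendsto a l (𝓝 (s ^ β))) (hb : Tendsto b l (𝓝 (s ^ β)⁻¹)) :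
    Tendsto (fun i => 1 / 2 * log (a i / b i) / log s) l (𝓝 β) := by
  have hsβ : 0 < s ^ β := Real.rpow_pos_of_pos (by linarith) β
  have hlog := (ha.div hb (inv_ne_zero hsβ.ne')).log (by positivity)
  have hlogs : log s ≠ 0 := (Real.log_pos hs).ne'
  have hβ : 1 / 2 * log (s ^ β / (s ^ β)⁻¹) / log s = β := by
    rw [div_inv_eq_mul, Real.log_mul hsβ.ne' hsβ.ne', Real.log_rpow (by linarith)]
    field_simp
    ring
  rw [← hβ]
  exact (hlog.const_mul (1 / 2)).div_const (log s)

/-- For fixed `s ≥ 2`, `p ∈ (0,1)` and an i.i.d. sequence from the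
Log-Logistic(α;0,1) distribution, the quantile estimators
`(p/(1-p))^{Q_{i,s}^{LL*}}`, computed from the first `n = i(s+1)-1`
observations, converge almost surely to the theoretical quantile
`(p/(1-p))^{1/α}` as `i → ∞`. -/
theorem stmt7 {Ω : Type*} [MeasurableSpace Ω] (μ : Measure Ω) [IsProbabilityMeasure μ]
    (s : ℕ) (hs : 2 ≤ s) (p : ℝ) (hp : p ∈ Set.Ioo (0 : ℝ) 1)
    (α : ℝ) (hα : 0 < α)
    (X : ℕ → Ω → ℝ) (hmeas : ∀ k, Measurable (X k))
    (hindep : iIndepFun X μ)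
    (hdist : ∀ k x, μ {ω | X k ω ≤ x} = ENNReal.ofReal (logLogisticCDF α x)) :
    ∀ᵐ ω ∂μ, Tendsto (fun i : ℕ =>
        (p / (1 - p)) ^ ((1 / 2) * Real.log
          (orderStat (i * (s + 1) - 1) (fun j => X j ω) (i * s) /
            orderStat (i * (s + 1) - 1) (fun j => X j ω) i) / Real.log s))
      atTop (nhds ((p / (1 - p)) ^ (1 / α))) := by
  have hident : ∀ k, IdentDistrib (X k) (X 0) μ μ := fun k =>
    identDistrib_of_forall_measure_le_eq (hmeas k) (hmeas 0) fun x =>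
      (hdist k x).trans (hdist 0 x).symm
  have hemp : ∀ᵐ ω ∂μ, ∀ y : ℚ,
      Tendsto (fun n => empiricalCDF (X · ω) n y) atTop (𝓝 (logLogisticCDF α y)) := by
    refine ae_all_iff.2 fun y => ?_
    simpa only [measureReal_def, hdist, ENNReal.toReal_ofReal (logLogisticCDF_nonneg y)]
      using ae_tendsto_empiricalCDF (hmeas 0) (fun i j hij => hindep.indepFun hij) hident y
  filter_upwards [hemp] with ω hω
  have hupper := tendsto_orderStat_mul_sub_one_logLogistic hα hω (c := s) (m := s + 1)
    (by omega) (by omega)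
  have hlower := tendsto_orderStat_mul_sub_one_logLogistic hα hω (c := 1) (m := s + 1)
    one_pos (by omega)
  push_cast at hupper hlower
  rw [add_sub_cancel_left, div_one] at hupper
  rw [add_sub_cancel_right, one_div, Real.inv_rpow (by positivity)] at hlower
  simp only [mul_one] at hlower
  exact tendsto_const_nhds.rpow (tendsto_half_log_div_div_log (by exact_mod_cast hs) hupper hlower)
    (Or.inl (div_pos hp.1 (sub_pos.2 hp.2)).ne')
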